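/- Let s and t be coprime positive integers and n, m integers with 0 < n < s and 0 < m < t. For every τ ∈ ℂ (writing q^x := exp(2πiτx) for x ∈ ℝ) and every positive integer N, the finite-sum identity Σ_{c=0}^{N−1} Σ_{r=−c}^{c} ( q^{st·r² − (nt+ms)r + mn/2} − q^{st·r² + (nt−ms)r − mn/2} ) = N·( q^{mn/2} − q^{−mn/2} ) + Σ_{r=1}^{N−1} (N − r)·( q^{Δ_{s−n,m,−2r+1} − D} − q^{Δ_{s−n,t−m,−2r} − D} − q^{Δ_{n,m,−2r} − D} + q^{Δ_{n,t−m,−2r−1} − D} ) holds, where D := (m²s² + n²t²)/(4st). -/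
import Mathlib


open Complex Finset

/-- `Q τ x = q^x = exp(2πiτx)` for real `x`. -/
noncomputable def Q (τ : ℂ) (x : ℝ) : ℂ := Complex.exp (2 * Real.pi * Complex.I * τ * x)

/-- The conformal weight `Δ_{a,b,k} = (bs - at + stk)²/(4st)`. -/
noncomputable def Δ (s t a b k : ℤ) : ℝ :=
  ((b * s - a * t + s * t * k : ℤ) : ℝ) ^ 2 / (4 * s * t)

lemma Q_congr (τ : ℂ) {x y : ℝ} (h : x = y) : Q τ x = Q τ y := by rw [h]

lemma exp1 (s t n m r : ℤ) (hs : (s:ℝ) ≠ 0) (ht : (t:ℝ) ≠ 0) :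
    Δ s t (s - n) m (-(2*r) + 1) - ((m^2*s^2 + n^2*t^2 : ℤ):ℝ)/(4*s*t)
    = ((s*t*r^2 - (n*t + m*s)*r : ℤ):ℝ) + ((m*n : ℤ):ℝ)/2 := by
  unfold Δ; push_cast; field_simp; ring

lemma exp2 (s t n m r : ℤ) (hs : (s:ℝ) ≠ 0) (ht : (t:ℝ) ≠ 0) :
    Δ s t (s - n) (t - m) (-(2*r)) - ((m^2*s^2 + n^2*t^2 : ℤ):ℝ)/(4*s*t)
    = ((s*t*(-r)^2 + (n*t - m*s)*(-r) : ℤ):ℝ) - ((m*n : ℤ):ℝ)/2 := by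
  unfold Δ; push_cast; field_simp; ring

lemma exp3 (s t n m r : ℤ) (hs : (s:ℝ) ≠ 0) (ht : (t:ℝ) ≠ 0) :
    Δ s t n m (-(2*r)) - ((m^2*s^2 + n^2*t^2 : ℤ):ℝ)/(4*s*t)
    = ((s*t*r^2 + (n*t - m*s)*r : ℤ):ℝ) - ((m*n : ℤ):ℝ)/2 := by
  unfold Δ; push_cast; field_simp; ring

lemma exp4 (s t n m r : ℤ) (hs : (s:ℝ) ≠ 0) (ht : (t:ℝ) ≠ 0) :
    Δ s t n (t - m) (-(2*r) - 1) - ((m^2*s^2 + n^2*t^2 : ℤ):ℝ)/(4*s*t)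
    = ((s*t*(-r)^2 - (n*t + m*s)*(-r) : ℤ):ℝ) + ((m*n : ℤ):ℝ)/2 := by
  unfold Δ; push_cast; field_simp; ring

lemma split_sym (N : ℕ) (F : ℤ → ℂ) :
    ∑ r ∈ Finset.Icc (-(N:ℤ)) N, F r
      = F 0 + ∑ r ∈ Finset.Icc 1 N, (F r + F (-(r:ℤ))) := by
  have hsplit : Finset.Icc (-(N:ℤ)) (N:ℤ) = Finset.Icc (-(N:ℤ)) (-1) ∪ Finset.Icc 0 (N:ℤ) := by
    ext x; simp only [Finset.mem_Icc, Finset.mem_union]; omega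
  have hdisj : Disjoint (Finset.Icc (-(N:ℤ)) (-1)) (Finset.Icc 0 (N:ℤ)) := by
    simp only [Finset.disjoint_left, Finset.mem_Icc]; intro a h1 h2; omega
  have h0 : Finset.Icc (0:ℤ) (N:ℤ) = insert 0 (Finset.Icc 1 (N:ℤ)) := by
    ext x; simp only [Finset.mem_Icc, Finset.mem_insert]; omega
  have hneg : ∑ r ∈ Finset.Icc (-(N:ℤ)) (-1), F r = ∑ r ∈ Finset.Icc (1:ℤ) N, F (-r) := by
    refine Finset.sum_nbij' (fun r => -r) (fun r => -r) ?_ ?_ ?_ ?_ ?_ <;>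
      intro a ha <;> simp only [Finset.mem_Icc] at * <;> first | omega | simp
  have hcast : ∀ (H : ℤ → ℂ), ∑ r ∈ Finset.Icc (1:ℤ) N, H r = ∑ r ∈ Finset.Icc 1 N, H (r:ℤ) := by
    intro H
    refine Finset.sum_nbij' (fun r => r.toNat) (fun r => (r:ℤ)) ?_ ?_ ?_ ?_ ?_ <;>
      intro a ha <;> simp only [Finset.mem_Icc] at * <;>
        first | omega | simp [Int.toNat_of_nonneg (by omega : (0:ℤ) ≤ a)]
  rw [hsplit, Finset.sum_union hdisj, hneg, h0, Finset.sum_insert (by simp), hcast, hcast,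
    Finset.sum_add_distrib]
  ring

lemma aux_sum (A B : ℤ → ℂ) (N : ℕ) (hN : 0 < N) :
    ∑ c ∈ Finset.range N, ∑ r ∈ Finset.Icc (-(c:ℤ)) (c:ℤ), (A r - B r)
      = (N:ℂ) * (A 0 - B 0)
        + ∑ r ∈ Finset.Icc 1 (N-1), ((N:ℂ) - (r:ℂ)) *
            ((A (r:ℤ) - B (r:ℤ)) + (A (-(r:ℤ)) - B (-(r:ℤ)))) := by
  induction N, hN using Nat.le_induction with
  | base => simp
  | succ N hN ih =>
    have h1 : ∑ r ∈ Finset.Icc 1 N, ((N:ℂ) - (r:ℂ)) *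
          ((A (r:ℤ) - B (r:ℤ)) + (A (-(r:ℤ)) - B (-(r:ℤ))))
        = ∑ r ∈ Finset.Icc 1 (N-1), ((N:ℂ) - (r:ℂ)) *
          ((A (r:ℤ) - B (r:ℤ)) + (A (-(r:ℤ)) - B (-(r:ℤ)))) := by
      symm
      apply Finset.sum_subset
      · intro x hx; simp only [Finset.mem_Icc] at *; omega
      · intro x hx hx'
        have hxN : x = N := by
          simp only [Finset.mem_Icc] at *; omega
        subst hxN; simp
    have h2 : ∑ r ∈ Finset.Icc 1 N, ((N:ℂ) + 1 - (r:ℂ)) *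
          ((A (r:ℤ) - B (r:ℤ)) + (A (-(r:ℤ)) - B (-(r:ℤ))))
        = ∑ r ∈ Finset.Icc 1 (N-1), ((N:ℂ) - (r:ℂ)) *
            ((A (r:ℤ) - B (r:ℤ)) + (A (-(r:ℤ)) - B (-(r:ℤ))))
          + ∑ r ∈ Finset.Icc 1 N, ((A (r:ℤ) - B (r:ℤ)) + (A (-(r:ℤ)) - B (-(r:ℤ)))) := by
      rw [← h1, ← Finset.sum_add_distrib]
      exact Finset.sum_congr rfl (fun r _ => by ring)
    rw [Finset.sum_range_succ, ih, split_sym N (fun r => A r - B r), Nat.add_sub_cancel]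
    push_cast
    rw [h2]
    ring

theorem statement8 (s t n m : ℤ) (hs : 0 < s) (ht : 0 < t) (hst : IsCoprime s t)
    (hn : 0 < n) (hns : n < s) (hm : 0 < m) (hmt : m < t)
    (τ : ℂ) (N : ℕ) (hN : 0 < N) :
    ∑ c ∈ Finset.range N, ∑ r ∈ Finset.Icc (-(c : ℤ)) (c : ℤ),
        (Q τ (((s * t * r ^ 2 - (n * t + m * s) * r : ℤ) : ℝ) + ((m * n : ℤ) : ℝ) / 2)
          - Q τ (((s * t * r ^ 2 + (n * t - m * s) * r : ℤ) : ℝ) - ((m * n : ℤ) : ℝ) / 2)) =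
      (N : ℂ) * (Q τ (((m * n : ℤ) : ℝ) / 2) - Q τ (-(((m * n : ℤ) : ℝ) / 2)))
        + ∑ r ∈ Finset.Icc 1 (N - 1), ((N : ℂ) - (r : ℂ)) *
            (Q τ (Δ s t (s - n) m (-(2 * (r : ℤ)) + 1)
                - ((m ^ 2 * s ^ 2 + n ^ 2 * t ^ 2 : ℤ) : ℝ) / (4 * s * t))
              - Q τ (Δ s t (s - n) (t - m) (-(2 * (r : ℤ)))
                - ((m ^ 2 * s ^ 2 + n ^ 2 * t ^ 2 : ℤ) : ℝ) / (4 * s * t))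
              - Q τ (Δ s t n m (-(2 * (r : ℤ)))
                - ((m ^ 2 * s ^ 2 + n ^ 2 * t ^ 2 : ℤ) : ℝ) / (4 * s * t))
              + Q τ (Δ s t n (t - m) (-(2 * (r : ℤ)) - 1)
                - ((m ^ 2 * s ^ 2 + n ^ 2 * t ^ 2 : ℤ) : ℝ) / (4 * s * t))) := by
  have hs' : (s:ℝ) ≠ 0 := Int.cast_ne_zero.mpr hs.ne'
  have ht' : (t:ℝ) ≠ 0 := Int.cast_ne_zero.mpr ht.ne'
  set A : ℤ → ℂ := fun r =>
    Q τ (((s * t * r ^ 2 - (n * t + m * s) * r : ℤ) : ℝ) + ((m * n : ℤ) : ℝ) / 2) with hA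
  set B : ℤ → ℂ := fun r =>
    Q τ (((s * t * r ^ 2 + (n * t - m * s) * r : ℤ) : ℝ) - ((m * n : ℤ) : ℝ) / 2) with hB
  have hA0 : Q τ (((m * n : ℤ) : ℝ) / 2) = A 0 := by
    rw [hA]; exact Q_congr τ (by push_cast; ring)
  have hB0 : Q τ (-(((m * n : ℤ) : ℝ) / 2)) = B 0 := by
    rw [hB]; exact Q_congr τ (by push_cast; ring)
  have hG : ∀ r : ℕ,
      (Q τ (Δ s t (s - n) m (-(2 * (r : ℤ)) + 1)
          - ((m ^ 2 * s ^ 2 + n ^ 2 * t ^ 2 : ℤ) : ℝ) / (4 * s * t))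
        - Q τ (Δ s t (s - n) (t - m) (-(2 * (r : ℤ)))
          - ((m ^ 2 * s ^ 2 + n ^ 2 * t ^ 2 : ℤ) : ℝ) / (4 * s * t))
        - Q τ (Δ s t n m (-(2 * (r : ℤ)))
          - ((m ^ 2 * s ^ 2 + n ^ 2 * t ^ 2 : ℤ) : ℝ) / (4 * s * t))
        + Q τ (Δ s t n (t - m) (-(2 * (r : ℤ)) - 1)
          - ((m ^ 2 * s ^ 2 + n ^ 2 * t ^ 2 : ℤ) : ℝ) / (4 * s * t)))
      = (A (r:ℤ) - B (r:ℤ)) + (A (-(r:ℤ)) - B (-(r:ℤ))) := by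
    intro r
    rw [Q_congr τ (exp1 s t n m (r:ℤ) hs' ht'), Q_congr τ (exp2 s t n m (r:ℤ) hs' ht'),
      Q_congr τ (exp3 s t n m (r:ℤ) hs' ht'), Q_congr τ (exp4 s t n m (r:ℤ) hs' ht'),
      hA, hB]
    simp only
    ring
  rw [hA0, hB0, aux_sum A B N hN]
  congr 1
  exact Finset.sum_congr rfl (fun r _ => by rw [hG r])
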